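/- Let U, Q be real n×p matrices with UᵀU = QᵀQ = I_p, UᵀQ = 0, let A, C ∈ so(p) and B ∈ ℝ^{p×p}. With ρ(t) = (U Q) exp_m(t[[A,−Bᵀ],[B,C]]) [I_p; 0] and ρ_⊥(t) = (U Q) exp_m(t[[A,−Bᵀ],[B,C]]) [0; I_p], the covariant acceleration D_tρ′(t) = ρ″(t) + ρ′(t)ρ′(t)ᵀρ(t) + ρ(t)((ρ(t)ᵀρ′(t))² + ρ′(t)ᵀρ′(t)) satisfies D_tρ′(t) = ρ_⊥(t)CB for all t ∈ ℝ, and its squared canonical norm is constant and equal to ‖CB‖_F². -/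

import Mathlib

open Matrix NormedSpace

attribute [local instance] Matrix.frobeniusNormedAddCommGroup Matrix.frobeniusNormedSpace

/-- The short economy-size quasi-geodesic `ρ(t) = (U Q) exp_m(t[[A,−Bᵀ],[B,C]]) [I_p; 0]`. -/
noncomputable def shortQG (n p : ℕ) (U Q : Matrix (Fin n) (Fin p) ℝ)
    (A B C : Matrix (Fin p) (Fin p) ℝ) (t : ℝ) : Matrix (Fin n) (Fin p) ℝ :=
  fromCols U Q * exp (t • fromBlocks A (-Bᵀ) B C) * fromRows 1 0

/-- The accompanying curve `ρ⊥(t) = (U Q) exp_m(t[[A,−Bᵀ],[B,C]]) [0; I_p]`. -/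
noncomputable def shortQGperp (n p : ℕ) (U Q : Matrix (Fin n) (Fin p) ℝ)
    (A B C : Matrix (Fin p) (Fin p) ℝ) (t : ℝ) : Matrix (Fin n) (Fin p) ℝ :=
  fromCols U Q * exp (t • fromBlocks A (-Bᵀ) B C) * fromRows 0 1

section auxx

lemma fromRows_add' {m₁ m₂ n : Type*} (A₁ B₁ : Matrix m₁ n ℝ) (A₂ B₂ : Matrix m₂ n ℝ) :
    fromRows A₁ A₂ + fromRows B₁ B₂ = fromRows (A₁ + B₁) (A₂ + B₂) := by
  ext (i | i) j <;> simp

attribute [local instance] Matrix.frobeniusNormedRing Matrix.frobeniusNormedAlgebra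

/-- derivative of `t ↦ W' * exp (t•X) * Y`. -/
lemma auxHasDeriv (n p : ℕ) (W' : Matrix (Fin n) (Fin p ⊕ Fin p) ℝ)
    (X : Matrix (Fin p ⊕ Fin p) (Fin p ⊕ Fin p) ℝ) (Y : Matrix (Fin p ⊕ Fin p) (Fin p) ℝ)
    (t : ℝ) :
    HasDerivAt (fun u : ℝ => W' * exp (u • X) * Y) (W' * (exp (t • X) * X) * Y) t := by
  have h := hasDerivAt_exp_smul_const (𝕂 := ℝ) X t
  let L : Matrix (Fin p ⊕ Fin p) (Fin p ⊕ Fin p) ℝ →ₗ[ℝ] Matrix (Fin n) (Fin p) ℝ :=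
    { toFun := fun M => W' * M * Y
      map_add' := fun M N => by rw [Matrix.mul_add, Matrix.add_mul]
      map_smul' := fun c M => by rw [Matrix.mul_smul, Matrix.smul_mul]; rfl }
  exact (L.toContinuousLinearMap.hasFDerivAt (x := exp (t • X))).comp_hasDerivAt t h

/-- the exponential of a skew-symmetric matrix is orthogonal -/
lemma auxExpOrtho (p : ℕ) (X : Matrix (Fin p ⊕ Fin p) (Fin p ⊕ Fin p) ℝ)
    (hX : Xᵀ = -X) (t : ℝ) :
    (exp (t • X))ᵀ * exp (t • X) = 1 := by
  rw [← Matrix.exp_transpose, Matrix.transpose_smul, hX, smul_neg,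
    ← Matrix.exp_add_of_commute _ _ ((Commute.refl (t • X)).neg_left),
    neg_add_cancel, exp_zero]

end auxx

section core

variable {n p : ℕ}

/-- orthogonality transfer -/
lemma keyOrtho {W : Matrix (Fin n) (Fin p ⊕ Fin p) ℝ}
    {G : Matrix (Fin p ⊕ Fin p) (Fin p ⊕ Fin p) ℝ}
    (hW : Wᵀ * W = 1) (hG : Gᵀ * G = 1)
    (M N : Matrix (Fin p ⊕ Fin p) (Fin p) ℝ) :
    (W * G * M)ᵀ * (W * G * N) = Mᵀ * N := by
  simp only [transpose_mul, Matrix.mul_assoc]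
  rw [← Matrix.mul_assoc Wᵀ W, hW, Matrix.one_mul, ← Matrix.mul_assoc Gᵀ G, hG, Matrix.one_mul]

/-- the block-level identity -/
lemma blockId (p : ℕ) (A B C : Matrix (Fin p) (Fin p) ℝ) (hA : Aᵀ = -A)
    (R R' : Matrix (Fin p ⊕ Fin p) (Fin p) ℝ) (hR : R = fromRows 1 0) (hR' : R' = fromRows 0 1) :
    fromBlocks A (-Bᵀ) B C * (fromBlocks A (-Bᵀ) B C * R) +
      fromBlocks A (-Bᵀ) B C * R * ((fromBlocks A (-Bᵀ) B C * R)ᵀ * R) +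
      R * ((Rᵀ * (fromBlocks A (-Bᵀ) B C * R)) ^ 2 +
          (fromBlocks A (-Bᵀ) B C * R)ᵀ * (fromBlocks A (-Bᵀ) B C * R)) =
    R' * (C * B) := by
  subst hR hR'
  have h1 : fromBlocks A (-Bᵀ) B C * (fromRows (1 : Matrix (Fin p) (Fin p) ℝ) 0 : Matrix (Fin p ⊕ Fin p) (Fin p) ℝ)
      = fromRows A B := by
    rw [fromBlocks_mul_fromRows]
    simp
  rw [h1]
  simp only [transpose_fromRows, fromCols_mul_fromRows, fromRows_mul, fromBlocks_mul_fromRows,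
    fromRows_add', hA, sq, Matrix.transpose_one, Matrix.transpose_zero, Matrix.one_mul,
    Matrix.mul_one, Matrix.zero_mul, Matrix.mul_zero, add_zero, zero_add, Matrix.neg_mul,
    Matrix.mul_neg, neg_neg]
  rw [fromRows_neg, fromRows_add', fromRows_add', fromRows_ext_iff]
  constructor <;> abel


/-- trace of `MᵀM` is the squared Frobenius norm -/
lemma traceNorm (p : ℕ) (M : Matrix (Fin p) (Fin p) ℝ) : trace (Mᵀ * M) = ‖M‖ ^ 2 := by
  have hS : (0:ℝ) ≤ ∑ i, ∑ j, ‖M i j‖ ^ (2:ℝ) := by positivity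
  rw [Matrix.frobenius_norm_def, ← Real.rpow_natCast _ 2, ← Real.rpow_mul hS]
  norm_num
  simp only [Matrix.trace, Matrix.diag, Matrix.mul_apply, Matrix.transpose_apply, sq]
  rw [Finset.sum_comm]

lemma part2core (W : Matrix (Fin n) (Fin p ⊕ Fin p) ℝ)
    (G : Matrix (Fin p ⊕ Fin p) (Fin p ⊕ Fin p) ℝ) (hW : Wᵀ*W = 1) (hG : Gᵀ*G = 1)
    (D : Matrix (Fin p) (Fin p) ℝ) :
    trace ((W * G * (fromRows 0 1 : Matrix (Fin p ⊕ Fin p) (Fin p) ℝ) * D)ᵀ *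
        ((1 : Matrix (Fin n) (Fin n) ℝ) -
          (1/2:ℝ) • (W * G * (fromRows 1 0 : Matrix (Fin p ⊕ Fin p) (Fin p) ℝ) *
            (W * G * (fromRows 1 0 : Matrix (Fin p ⊕ Fin p) (Fin p) ℝ))ᵀ)) *
        (W * G * (fromRows 0 1 : Matrix (Fin p ⊕ Fin p) (Fin p) ℝ) * D)) = ‖D‖ ^ 2 := by
  have hRR' : (fromRows 1 0 : Matrix (Fin p ⊕ Fin p) (Fin p) ℝ)ᵀ *
      (fromRows 0 1 : Matrix (Fin p ⊕ Fin p) (Fin p) ℝ) = 0 := by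
    rw [transpose_fromRows, fromCols_mul_fromRows]; simp
  have hR'R' : (fromRows 0 1 : Matrix (Fin p ⊕ Fin p) (Fin p) ℝ)ᵀ *
      (fromRows 0 1 : Matrix (Fin p ⊕ Fin p) (Fin p) ℝ) = 1 := by
    rw [transpose_fromRows, fromCols_mul_fromRows]; simp
  have hP : W * G * (fromRows 0 1 : Matrix (Fin p ⊕ Fin p) (Fin p) ℝ) * D
      = W * G * ((fromRows 0 1 : Matrix (Fin p ⊕ Fin p) (Fin p) ℝ) * D) := by
    rw [Matrix.mul_assoc]
  rw [hP]
  set R : Matrix (Fin p ⊕ Fin p) (Fin p) ℝ := fromRows 1 0 with hRdef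
  set P : Matrix (Fin n) (Fin p) ℝ := W * G * ((fromRows 0 1 : Matrix (Fin p ⊕ Fin p) (Fin p) ℝ) * D) with hPdef
  have hRP : (W * G * R)ᵀ * P = 0 := by
    rw [hPdef, keyOrtho hW hG, ← Matrix.mul_assoc, hRdef, hRR', Matrix.zero_mul]
  have hPR : Pᵀ * (W * G * R) = 0 := by
    have := congrArg Matrix.transpose hRP
    simpa [Matrix.transpose_mul] using this
  have hPP : Pᵀ * P = Dᵀ * D := by
    rw [hPdef, keyOrtho hW hG, Matrix.transpose_mul, Matrix.mul_assoc,
      ← Matrix.mul_assoc (fromRows 0 1)ᵀ, hR'R', Matrix.one_mul]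
  rw [Matrix.mul_sub, Matrix.mul_one, Matrix.mul_smul, Matrix.sub_mul, Matrix.smul_mul,
    ← Matrix.mul_assoc Pᵀ (W * G * R), hPR, Matrix.zero_mul, Matrix.zero_mul, smul_zero,
    sub_zero, hPP]
  exact traceNorm p D

end core

/-- the covariant acceleration of the short economy-size quasi-geodesic equals
`ρ⊥(t) C B`, and its squared canonical norm is constant, equal to `‖CB‖_F²`. -/
theorem stmt16 (n p : ℕ) (U Q : Matrix (Fin n) (Fin p) ℝ)
    (A B C : Matrix (Fin p) (Fin p) ℝ)
    (hU : Uᵀ * U = 1) (hQ : Qᵀ * Q = 1) (hUQ : Uᵀ * Q = 0)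
    (hA : Aᵀ = -A) (hC : Cᵀ = -C) :
    ∀ t : ℝ,
      (deriv (deriv (shortQG n p U Q A B C)) t +
          deriv (shortQG n p U Q A B C) t * (deriv (shortQG n p U Q A B C) t)ᵀ *
            shortQG n p U Q A B C t +
          shortQG n p U Q A B C t *
            (((shortQG n p U Q A B C t)ᵀ * deriv (shortQG n p U Q A B C) t) ^ 2 +
              (deriv (shortQG n p U Q A B C) t)ᵀ * deriv (shortQG n p U Q A B C) t) =
        shortQGperp n p U Q A B C t * (C * B)) ∧
      trace ((shortQGperp n p U Q A B C t * (C * B))ᵀ *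
          ((1 : Matrix (Fin n) (Fin n) ℝ) -
            (1 / 2 : ℝ) • (shortQG n p U Q A B C t * (shortQG n p U Q A B C t)ᵀ)) *
          (shortQGperp n p U Q A B C t * (C * B))) =
        ‖C * B‖ ^ 2 := by
  intro t
  have hQU : Qᵀ * U = 0 := by
    have := congrArg Matrix.transpose hUQ
    simpa [Matrix.transpose_mul] using this
  have hW : (fromCols U Q)ᵀ * fromCols U Q = 1 := by
    rw [transpose_fromCols, fromRows_mul_fromCols, hU, hQ, hUQ, hQU, fromBlocks_one]
  have hXt : (fromBlocks A (-Bᵀ) B C)ᵀ = -(fromBlocks A (-Bᵀ) B C) := by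
    rw [fromBlocks_transpose, Matrix.transpose_neg, Matrix.transpose_transpose, hA, hC]
    ext (i | i) (j | j) <;> simp
  have hG := fun s : ℝ => auxExpOrtho p (fromBlocks A (-Bᵀ) B C) hXt s
  have e0 : shortQG n p U Q A B C = fun u =>
      fromCols U Q * exp (u • fromBlocks A (-Bᵀ) B C) * (fromRows 1 0 : Matrix (Fin p ⊕ Fin p) (Fin p) ℝ) := rfl
  have e1 : deriv (shortQG n p U Q A B C) = fun u =>
      fromCols U Q * exp (u • fromBlocks A (-Bᵀ) B C) *
        (fromBlocks A (-Bᵀ) B C * (fromRows 1 0 : Matrix (Fin p ⊕ Fin p) (Fin p) ℝ)) := by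
    funext s
    rw [e0]; erw [(auxHasDeriv n p (fromCols U Q) (fromBlocks A (-Bᵀ) B C) ((fromRows 1 0 : Matrix (Fin p ⊕ Fin p) (Fin p) ℝ)) s).deriv]
    simp only [Matrix.mul_assoc]
  have e2 : deriv (deriv (shortQG n p U Q A B C)) = fun u =>
      fromCols U Q * exp (u • fromBlocks A (-Bᵀ) B C) *
        (fromBlocks A (-Bᵀ) B C * (fromBlocks A (-Bᵀ) B C * (fromRows 1 0 : Matrix (Fin p ⊕ Fin p) (Fin p) ℝ))) := by
    rw [e1]; funext s
    erw [(auxHasDeriv n p (fromCols U Q) (fromBlocks A (-Bᵀ) B C)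
      (fromBlocks A (-Bᵀ) B C * (fromRows 1 0 : Matrix (Fin p ⊕ Fin p) (Fin p) ℝ)) s).deriv]
    simp only [Matrix.mul_assoc]
  constructor
  · rw [e2]
    simp only [e1, shortQG, shortQGperp]
    rw [Matrix.mul_assoc (fromCols U Q * exp (t • fromBlocks A (-Bᵀ) B C) *
      (fromBlocks A (-Bᵀ) B C * (fromRows 1 0 : Matrix (Fin p ⊕ Fin p) (Fin p) ℝ)))]
    erw [keyOrtho hW (hG t), keyOrtho hW (hG t), keyOrtho hW (hG t)]
    have hb := blockId p A B C hA ((fromRows 1 0 : Matrix (Fin p ⊕ Fin p) (Fin p) ℝ)) ((fromRows 0 1 : Matrix (Fin p ⊕ Fin p) (Fin p) ℝ)) rfl rfl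
    have h2 := congrArg
      (fun Z => fromCols U Q * exp (t • fromBlocks A (-Bᵀ) B C) * Z) hb
    erw [Matrix.mul_assoc (fromCols U Q) (exp (t • fromBlocks A (-Bᵀ) B C)) (fromRows 1 0 : Matrix (Fin p ⊕ Fin p) (Fin p) ℝ),
      Matrix.mul_assoc (fromCols U Q) (exp (t • fromBlocks A (-Bᵀ) B C)) (fromRows 0 1 : Matrix (Fin p ⊕ Fin p) (Fin p) ℝ)]
    simp only [Matrix.mul_add, Matrix.mul_assoc] at h2 ⊢
    exact h2
  · simp only [shortQG, shortQGperp]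
    exact part2core (fromCols U Q) (exp (t • fromBlocks A (-Bᵀ) B C)) hW (hG t) (C * B)
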